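/- arXiv:1102.0818 — 3 statements merged into one kernel-verified Lean document; each statement's English description precedes it below -/
import Mathlib

section
/- Discrete uniform stick breaking on n generates the same distribution on partitions of n as the cycle lengths of a uniformly random permutation of {1,...,n}: for any partition n_1 ≥ ... ≥ n_k of n with a_j = #{i : n_i = j}, the probability that the ranked stick-breaking lengths equal (n_1,...,n_k) is ∏_{j=1}^n 1/(j^{a_j} · a_j!). -/
/-!
Conditioning on the first piece `j`, which is uniform on `{1, …, n}`, the remaining pieces
perform stick breaking on `n - j`. The weights `1 / z_λ` satisfy the same first-step recursion,
`∑_{j ∈ λ} 1 / z_{λ ∖ j} = |λ| / z_λ`, since removing one part `j` from `λ` divides `z_λ` by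
`j · a_j`. As the pieces are not assumed measurable, `ℙ` is only subadditive on the events
involved, so the induction bounds from above both the event and its complement inside the
cylinder of the prefix already drawn; the two bounds together force equality.
-/

open Finset MeasureTheory
open scoped ENNReal Nat

theorem Multiset.cons_eq_iff_mem_and_eq_erase {α : Type*} [DecidableEq α] {a : α}
    {s t : Multiset α} : a ::ₘ s = t ↔ a ∈ t ∧ s = t.erase a := by
  constructor
  · rintro rfl
    exact ⟨Multiset.mem_cons_self a s, (Multiset.erase_cons_head a s).symm⟩
  · rintro ⟨ha, rfl⟩
    exact Multiset.cons_erase ha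

theorem measure_eq_of_le_of_measure_sdiff_add_le {Ω : Type*} [MeasurableSpace Ω]
    {μ : Measure Ω} {A B : Set Ω} {x : ℝ≥0∞} (hB : μ B ≠ ∞) (hA : μ A ≤ x)
    (hdiff : μ (B \ A) + x ≤ μ B) : μ A = x := by
  have hfin : μ (B \ A) ≠ ∞ := measure_ne_top_of_subset Set.sdiff_subset hB
  refine le_antisymm hA ((ENNReal.add_le_add_iff_left hfin).mp ?_)
  calc μ (B \ A) + x ≤ μ B := hdiff
    _ ≤ μ (B ∩ A) + μ (B \ A) := measure_le_inter_add_sdiff μ B A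
    _ ≤ μ (B \ A) + μ A := by rw [add_comm]; gcongr; exact Set.inter_subset_right

theorem sInf_sum_range_eq_of_pos {f : ℕ → ℕ} {r : ℕ} (hpos : ∀ i < r, 0 < f i) :
    sInf {j | ∑ i ∈ range j, f i = ∑ i ∈ range r, f i} = r := by
  refine le_antisymm (Nat.sInf_le rfl) (le_csInf ⟨r, rfl⟩ fun j hj => ?_)
  by_contra! hjr
  have hle : f j + ∑ i ∈ range j, f i ≤ ∑ i ∈ range r, f i :=
    sum_range_succ_comm f j ▸ sum_le_sum_of_subset (range_subset_range.mpr hjr)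
  have := hpos j hjr
  simp only [Set.mem_ofPred_eq] at hj
  omega

namespace StickBreaking

/-- `z_λ`, the order of the centralizer of a permutation of cycle type `λ = m`. -/
def centralizerCard (m : Multiset ℕ) : ℕ :=
  ∏ j ∈ m.toFinset, j ^ m.count j * (m.count j)!

theorem prod_pow_count_mul_factorial_eq_centralizerCard {m : Multiset ℕ} {s : Finset ℕ}
    (hs : m.toFinset ⊆ s) : ∏ j ∈ s, j ^ m.count j * (m.count j)! = centralizerCard m := by
  refine (prod_subset hs fun j _ hj => ?_).symm
  simp [Multiset.count_eq_zero_of_notMem (by simpa using hj)]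

theorem centralizerCard_cons (j : ℕ) (t : Multiset ℕ) :
    centralizerCard (j ::ₘ t) = j * (t.count j + 1) * centralizerCard t := by
  rw [← prod_pow_count_mul_factorial_eq_centralizerCard (subset_refl _),
    ← prod_pow_count_mul_factorial_eq_centralizerCard (subset_insert j t.toFinset),
    Multiset.toFinset_cons,
    ← mul_prod_erase _ _ (mem_insert_self j _), ← mul_prod_erase _ _ (mem_insert_self j _),
    prod_congr rfl fun i hi => by rw [Multiset.count_cons_of_ne (ne_of_mem_erase hi)],
    Multiset.count_cons_self, pow_succ, Nat.factorial_succ]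
  ring

theorem centralizerCard_eq_mul_erase {m : Multiset ℕ} {j : ℕ} (hj : j ∈ m) :
    centralizerCard m = j * m.count j * centralizerCard (m.erase j) := by
  conv_lhs => rw [← Multiset.cons_erase hj]
  rw [centralizerCard_cons, Multiset.count_erase_self,
    Nat.sub_add_cancel (Multiset.one_le_count_iff_mem.mpr hj)]

theorem sum_inv_centralizerCard_erase {m : Multiset ℕ} (h0 : 0 ∉ m) :
    ∑ j ∈ m.toFinset, ((centralizerCard (m.erase j) : ℝ≥0∞))⁻¹
      = m.sum * (centralizerCard m : ℝ≥0∞)⁻¹ := by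
  have hterm : ∀ j ∈ m.toFinset, ((centralizerCard (m.erase j) : ℝ≥0∞))⁻¹
      = ((j * m.count j : ℕ) : ℝ≥0∞) * (centralizerCard m : ℝ≥0∞)⁻¹ := by
    intro j hj
    rw [Multiset.mem_toFinset] at hj
    have hjm : ((j * m.count j : ℕ) : ℝ≥0∞) ≠ 0 := by
      simp [Multiset.count_ne_zero.mpr hj, ne_of_mem_of_not_mem hj h0]
    rw [centralizerCard_eq_mul_erase hj, Nat.cast_mul _ (centralizerCard _),
      ENNReal.mul_inv (.inr (ENNReal.natCast_ne_top _)) (.inl (ENNReal.natCast_ne_top _)),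
      ← mul_assoc, ENNReal.mul_inv_cancel hjm (ENNReal.natCast_ne_top _), one_mul]
  rw [sum_congr rfl hterm, ← sum_mul, ← Nat.cast_sum, Finset.sum_multiset_count m]
  simp only [smul_eq_mul, Nat.cast_sum, Nat.cast_mul, mul_comm]

section Events

variable {Ω : Type*} (M : ℕ → Ω → ℕ)

def prefixEvent (k : ℕ) (c : ℕ → ℕ) : Set Ω := {ω | ∀ i < k, M i ω = c i}

def blockEvent (k : ℕ) (c : ℕ → ℕ) (r : ℕ) (m : Multiset ℕ) : Set Ω :=
  prefixEvent M k c ∩ {ω | (((List.range' k r).map (M · ω) : List ℕ) : Multiset ℕ) = m}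

def IsUniformStickBreaking [MeasurableSpace Ω] (ℙ : Measure Ω) (n : ℕ) : Prop :=
  ∀ k : ℕ, ∀ c : ℕ → ℕ, (∀ i < k, 1 ≤ c i) → ∑ i ∈ range k, c i < n → ∀ j : ℕ,
    ℙ (prefixEvent M k c ∩ {ω | M k ω = j})
      = (if 1 ≤ j ∧ j ≤ n - ∑ i ∈ range k, c i
          then ((n - ∑ i ∈ range k, c i : ℕ) : ℝ≥0∞)⁻¹ else 0) * ℙ (prefixEvent M k c)

theorem prefixEvent_succ_update (k : ℕ) (c : ℕ → ℕ) (j : ℕ) :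
    prefixEvent M (k + 1) (Function.update c k j) = prefixEvent M k c ∩ {ω | M k ω = j} := by
  ext ω
  simp only [prefixEvent, Set.mem_inter_iff, Set.mem_ofPred_eq, Nat.forall_lt_succ_right,
    Function.update_self]
  refine and_congr_left' (forall₂_congr fun i hi => ?_)
  rw [Function.update_of_ne hi.ne]

theorem sum_range_succ_update (k : ℕ) (c : ℕ → ℕ) (j : ℕ) :
    ∑ i ∈ range (k + 1), Function.update c k j i = ∑ i ∈ range k, c i + j := by
  rw [sum_range_succ, Function.update_self]
  congr 1
  exact sum_congr rfl fun i hi => Function.update_of_ne (mem_range.mp hi).ne _ _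

theorem one_le_update_of_lt_succ {k : ℕ} {c : ℕ → ℕ} {j : ℕ} (hc : ∀ i < k, 1 ≤ c i)
    (hj : 1 ≤ j) : ∀ i < k + 1, 1 ≤ Function.update c k j i := by
  intro i hi
  rcases Nat.lt_succ_iff_lt_or_eq.mp hi with hi | rfl
  · rw [Function.update_of_ne hi.ne]; exact hc i hi
  · rw [Function.update_self]; exact hj

theorem prefixEvent_zero (c : ℕ → ℕ) : prefixEvent M 0 c = Set.univ := by
  simp [prefixEvent]

theorem blockEvent_zero_zero (k : ℕ) (c : ℕ → ℕ) : blockEvent M k c 0 0 = prefixEvent M k c := by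
  ext ω; simp [blockEvent, prefixEvent]

theorem mem_blockEvent_succ {k : ℕ} {c : ℕ → ℕ} {r : ℕ} {m : Multiset ℕ} {ω : Ω} :
    ω ∈ blockEvent M k c (r + 1) m ↔ ∃ j ∈ m,
      ω ∈ blockEvent M (k + 1) (Function.update c k j) r (m.erase j) := by
  simp only [blockEvent, prefixEvent_succ_update, List.range'_succ, List.map_cons,
    ← Multiset.cons_coe, Multiset.cons_eq_iff_mem_and_eq_erase]
  constructor
  · rintro ⟨hP, hj, htail⟩
    exact ⟨M k ω, hj, ⟨hP, rfl⟩, htail⟩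
  · rintro ⟨j, hj, ⟨hP, rfl⟩, htail⟩
    exact ⟨hP, hj, htail⟩

theorem blockEvent_succ (k : ℕ) (c : ℕ → ℕ) (r : ℕ) (m : Multiset ℕ) :
    blockEvent M k c (r + 1) m
      = ⋃ j ∈ m.toFinset, blockEvent M (k + 1) (Function.update c k j) r (m.erase j) := by
  ext ω
  simp [mem_blockEvent_succ]

theorem prefixEvent_sdiff_blockEvent_succ_subset (k : ℕ) (c : ℕ → ℕ) {r : ℕ} {m : Multiset ℕ}
    (hcard : Multiset.card m = r + 1) :
    prefixEvent M k c \ blockEvent M k c (r + 1) m ⊆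
      ⋃ j, prefixEvent M (k + 1) (Function.update c k j) \
        blockEvent M (k + 1) (Function.update c k j) r (m.erase j) := by
  rintro ω ⟨hP, hE⟩
  refine Set.mem_iUnion.mpr ⟨M k ω, ?_, fun hEj => hE (mem_blockEvent_succ M |>.mpr ?_)⟩
  · rw [prefixEvent_succ_update]; exact ⟨hP, rfl⟩
  · refine ⟨M k ω, ?_, hEj⟩
    by_contra hj
    have := congrArg Multiset.card hEj.2
    simp [Multiset.erase_of_notMem hj, hcard] at this

variable [MeasurableSpace Ω] {ℙ : Measure Ω} {n : ℕ}

theorem measure_prefixEvent_succ_update (h : IsUniformStickBreaking M ℙ n) {k : ℕ} {c : ℕ → ℕ}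
    (hc : ∀ i < k, 1 ≤ c i) (hs : ∑ i ∈ range k, c i < n) (j : ℕ) :
    ℙ (prefixEvent M (k + 1) (Function.update c k j))
      = (if 1 ≤ j ∧ j ≤ n - ∑ i ∈ range k, c i
          then ((n - ∑ i ∈ range k, c i : ℕ) : ℝ≥0∞)⁻¹ else 0) * ℙ (prefixEvent M k c) := by
  rw [prefixEvent_succ_update]
  exact h k c hc hs j

theorem tsum_measure_prefixEvent_succ_update (h : IsUniformStickBreaking M ℙ n) {k : ℕ}
    {c : ℕ → ℕ} (hc : ∀ i < k, 1 ≤ c i) (hs : ∑ i ∈ range k, c i < n) :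
    ∑' j, ℙ (prefixEvent M (k + 1) (Function.update c k j)) = ℙ (prefixEvent M k c) := by
  set T := n - ∑ i ∈ range k, c i
  have hT : (T : ℝ≥0∞) ≠ 0 := by exact_mod_cast (Nat.sub_pos_of_lt hs).ne'
  simp_rw [measure_prefixEvent_succ_update M h hc hs, ENNReal.tsum_mul_right]
  rw [tsum_eq_sum (s := Icc 1 T) fun j hj => if_neg (by simpa using hj), sum_ite_of_true
    fun j hj => by simpa using hj, sum_const, Nat.card_Icc, Nat.add_sub_cancel, nsmul_eq_mul,
    ENNReal.mul_inv_cancel hT (ENNReal.natCast_ne_top T), one_mul]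

theorem sum_measure_prefixEvent_succ_update_mul (h : IsUniformStickBreaking M ℙ n) {k : ℕ}
    {c : ℕ → ℕ} {m : Multiset ℕ} (hc : ∀ i < k, 1 ≤ c i) (hs : ∑ i ∈ range k, c i < n)
    (hm : ∀ j ∈ m, 1 ≤ j) (hsum : ∑ i ∈ range k, c i + m.sum = n) :
    ∑ j ∈ m.toFinset, ℙ (prefixEvent M (k + 1) (Function.update c k j))
        * (centralizerCard (m.erase j) : ℝ≥0∞)⁻¹
      = ℙ (prefixEvent M k c) * (centralizerCard m : ℝ≥0∞)⁻¹ := by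
  have hT : n - ∑ i ∈ range k, c i = m.sum := by omega
  have hT0 : (m.sum : ℝ≥0∞) ≠ 0 := by rw [← hT]; exact_mod_cast (Nat.sub_pos_of_lt hs).ne'
  calc ∑ j ∈ m.toFinset, ℙ (prefixEvent M (k + 1) (Function.update c k j))
        * (centralizerCard (m.erase j) : ℝ≥0∞)⁻¹
      = ∑ j ∈ m.toFinset, (m.sum : ℝ≥0∞)⁻¹ * ℙ (prefixEvent M k c)
        * (centralizerCard (m.erase j) : ℝ≥0∞)⁻¹ := sum_congr rfl fun j hj => by
          rw [Multiset.mem_toFinset] at hj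
          rw [measure_prefixEvent_succ_update M h hc hs, hT,
            if_pos ⟨hm j hj, Multiset.le_sum_of_mem hj⟩]
    _ = (m.sum : ℝ≥0∞)⁻¹ * ℙ (prefixEvent M k c) * (m.sum * (centralizerCard m : ℝ≥0∞)⁻¹) := by
          rw [← mul_sum, sum_inv_centralizerCard_erase fun h0 => by simpa using hm 0 h0]
    _ = ℙ (prefixEvent M k c) * (centralizerCard m : ℝ≥0∞)⁻¹ := by
          rw [mul_comm _ (ℙ _), mul_assoc,
            ENNReal.inv_mul_cancel_left hT0 (ENNReal.natCast_ne_top _)]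

theorem measure_blockEvent_bounds (h : IsUniformStickBreaking M ℙ n) (r : ℕ) {k : ℕ}
    {c : ℕ → ℕ} {m : Multiset ℕ} (hcard : Multiset.card m = r) (hc : ∀ i < k, 1 ≤ c i)
    (hm : ∀ j ∈ m, 1 ≤ j) (hsum : ∑ i ∈ range k, c i + m.sum = n) :
    ℙ (blockEvent M k c r m) ≤ ℙ (prefixEvent M k c) * (centralizerCard m : ℝ≥0∞)⁻¹ ∧
      ℙ (prefixEvent M k c \ blockEvent M k c r m)
        + ℙ (prefixEvent M k c) * (centralizerCard m : ℝ≥0∞)⁻¹ ≤ ℙ (prefixEvent M k c) := by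
  induction r generalizing k c m with
  | zero =>
    obtain rfl := Multiset.card_eq_zero.mp hcard
    simp [blockEvent_zero_zero, centralizerCard]
  | succ r ih =>
    obtain ⟨j₀, hj₀⟩ := Multiset.card_pos_iff_exists_mem.mp (show 0 < Multiset.card m by omega)
    have hs : ∑ i ∈ range k, c i < n := by
      have := hm j₀ hj₀; have := Multiset.le_sum_of_mem hj₀; omega
    set P := prefixEvent M k c
    set Pj := fun j => prefixEvent M (k + 1) (Function.update c k j)
    set Ej := fun j => blockEvent M (k + 1) (Function.update c k j) r (m.erase j)
    set w := fun j => ℙ (Pj j) * (centralizerCard (m.erase j) : ℝ≥0∞)⁻¹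
    have hweights : ∑ j ∈ m.toFinset, w j = ℙ P * (centralizerCard m : ℝ≥0∞)⁻¹ :=
      sum_measure_prefixEvent_succ_update_mul M h hc hs hm hsum
    have hbranch : ∀ j ∈ m, ℙ (Ej j) ≤ w j ∧ ℙ (Pj j \ Ej j) + w j ≤ ℙ (Pj j) := by
      intro j hj
      refine ih (by simp [Multiset.card_erase_of_mem hj, hcard]) ?_
        (fun x hx => hm x (Multiset.mem_of_mem_erase hx)) ?_
      · exact one_le_update_of_lt_succ hc (hm j hj)
      · rw [sum_range_succ_update, add_assoc, ← Multiset.sum_cons, Multiset.cons_erase hj, hsum]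
    constructor
    · calc ℙ (blockEvent M k c (r + 1) m) ≤ ∑ j ∈ m.toFinset, ℙ (Ej j) := by
            rw [blockEvent_succ]; exact measure_biUnion_finset_le _ _
        _ ≤ ∑ j ∈ m.toFinset, w j :=
            sum_le_sum fun j hj => (hbranch j (Multiset.mem_toFinset.mp hj)).1
        _ = _ := hweights
    · calc ℙ (P \ blockEvent M k c (r + 1) m) + ℙ P * (centralizerCard m : ℝ≥0∞)⁻¹
          ≤ ∑' j, ℙ (Pj j \ Ej j) + ∑' j, (m.toFinset : Set ℕ).indicator w j := by
            rw [← hweights, sum_eq_tsum_indicator]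
            gcongr
            exact (measure_mono (prefixEvent_sdiff_blockEvent_succ_subset M k c hcard)).trans
              (measure_iUnion_le _)
        _ = ∑' j, (ℙ (Pj j \ Ej j) + (m.toFinset : Set ℕ).indicator w j) := ENNReal.tsum_add.symm
        _ ≤ ∑' j, ℙ (Pj j) := ENNReal.tsum_le_tsum fun j => by
            by_cases hj : j ∈ m
            · simpa [hj] using (hbranch j hj).2
            · simpa [hj] using measure_mono Set.sdiff_subset
        _ = ℙ P := tsum_measure_prefixEvent_succ_update M h hc hs

theorem measure_blockEvent [IsFiniteMeasure ℙ] (h : IsUniformStickBreaking M ℙ n) {k : ℕ}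
    {c : ℕ → ℕ} {m : Multiset ℕ} (hc : ∀ i < k, 1 ≤ c i) (hm : ∀ j ∈ m, 1 ≤ j)
    (hsum : ∑ i ∈ range k, c i + m.sum = n) :
    ℙ (blockEvent M k c (Multiset.card m) m)
      = ℙ (prefixEvent M k c) * (centralizerCard m : ℝ≥0∞)⁻¹ :=
  have hbounds := measure_blockEvent_bounds M h _ rfl hc hm hsum
  measure_eq_of_le_of_measure_sdiff_add_le (measure_ne_top _ _) hbounds.1 hbounds.2

end Events

theorem setOf_stoppedPieces_eq_blockEvent {Ω : Type*} (M : ℕ → Ω → ℕ) (c : ℕ → ℕ)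
    {m : Multiset ℕ} (hm : ∀ j ∈ m, 1 ≤ j) :
    {ω | (((List.range (sInf {j | ∑ i ∈ range j, M i ω = m.sum})).map (M · ω) : List ℕ)
      : Multiset ℕ) = m} = blockEvent M 0 c (Multiset.card m) m := by
  ext ω
  simp only [blockEvent, prefixEvent, Set.mem_inter_iff, Set.mem_ofPred_eq, Nat.not_lt_zero,
    IsEmpty.forall_iff, forall_const, true_and, ← List.range_eq_range']
  constructor
  · intro hω
    have hK := congrArg Multiset.card hω
    simp only [Multiset.coe_card, List.length_map, List.length_range] at hK
    rwa [← hK]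
  · intro hω
    have hsum : ∑ i ∈ range (Multiset.card m), M i ω = m.sum := congrArg Multiset.sum hω
    have hpos : ∀ i < Multiset.card m, 0 < M i ω := fun i hi =>
      hm _ (hω ▸ Multiset.mem_coe.mpr (List.mem_map_of_mem (List.mem_range.mpr hi)))
    rwa [← hsum, sInf_sum_range_eq_of_pos hpos]

end StickBreaking

theorem discrete_stick_breaking_partition_prob_general
    {Ω : Type*} [MeasurableSpace Ω] (ℙ : Measure Ω) [IsProbabilityMeasure ℙ]
    (n : ℕ) (M : ℕ → Ω → ℕ)
    (hstep : ∀ k : ℕ, ∀ c : ℕ → ℕ, (∀ i < k, 1 ≤ c i) →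
      (∑ i ∈ Finset.range k, c i) < n → ∀ m : ℕ,
      ℙ {ω | (∀ i < k, M i ω = c i) ∧ M k ω = m}
        = (if 1 ≤ m ∧ m ≤ n - ∑ i ∈ Finset.range k, c i
            then ((n - ∑ i ∈ Finset.range k, c i : ℕ) : ENNReal)⁻¹ else 0)
          * ℙ {ω | ∀ i < k, M i ω = c i})
    (m : Multiset ℕ) (hmsum : m.sum = n) (hmpos : ∀ j ∈ m, 1 ≤ j) :
    ℙ {ω | (((List.range (sInf {j | ∑ i ∈ Finset.range j, M i ω = n})).map
              (fun i => M i ω) : List ℕ) : Multiset ℕ) = m}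
      = ∏ j ∈ Finset.Icc 1 n,
          (((j : ENNReal) ^ (m.count j)) * (Nat.factorial (m.count j) : ENNReal))⁻¹ := by
  subst hmsum
  have hsupp : m.toFinset ⊆ Icc 1 m.sum := fun j hj => by
    rw [Multiset.mem_toFinset] at hj
    exact mem_Icc.mpr ⟨hmpos j hj, Multiset.le_sum_of_mem hj⟩
  rw [StickBreaking.setOf_stoppedPieces_eq_blockEvent M 0 hmpos,
    StickBreaking.measure_blockEvent M hstep (k := 0) (by simp) hmpos (by simp),
    StickBreaking.prefixEvent_zero, measure_univ, one_mul,
    ← ENNReal.prod_inv_distrib fun _ _ _ _ _ => .inr (by simp [ENNReal.mul_eq_top]),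
    ← StickBreaking.prod_pow_count_mul_factorial_eq_centralizerCard hsupp]
  norm_cast

/-- Discrete uniform stick breaking on `n` generates the same distribution on
partitions of `n` as the cycle lengths of a uniform random permutation of
`{1, …, n}`: for a partition of `n` with `a_j` parts equal to `j`, the probability
that the multiset of stick-breaking pieces equals this partition is
`∏_{j=1}^n 1/(j^{a_j} a_j!)`.

The stick-breaking dynamics are encoded by `hstep`: conditionally on any prefix of
pieces with sum `< n`, the next piece is uniform on `{1, …, n - (sum so far)}`.
The process stops at `K ω`, the first index where the partial sums reach `n`. -/
theorem discrete_stick_breaking_partition_prob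
    {Ω : Type*} [MeasurableSpace Ω] (ℙ : Measure Ω) [IsProbabilityMeasure ℙ]
    (n : ℕ) (hn : 1 ≤ n) (M : ℕ → Ω → ℕ)
    (hstep : ∀ k : ℕ, ∀ c : ℕ → ℕ, (∀ i < k, 1 ≤ c i) →
      (∑ i ∈ Finset.range k, c i) < n → ∀ m : ℕ,
      ℙ {ω | (∀ i < k, M i ω = c i) ∧ M k ω = m}
        = (if 1 ≤ m ∧ m ≤ n - ∑ i ∈ Finset.range k, c i
            then ((n - ∑ i ∈ Finset.range k, c i : ℕ) : ENNReal)⁻¹ else 0)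
          * ℙ {ω | ∀ i < k, M i ω = c i})
    (m : Multiset ℕ) (hmsum : m.sum = n) (hmpos : ∀ j ∈ m, 1 ≤ j) :
    ℙ {ω | (((List.range (sInf {j | ∑ i ∈ Finset.range j, M i ω = n})).map
              (fun i => M i ω) : List ℕ) : Multiset ℕ) = m}
      = ∏ j ∈ Finset.Icc 1 n,
          (((j : ENNReal) ^ (m.count j)) * (Nat.factorial (m.count j) : ENNReal))⁻¹ :=
  discrete_stick_breaking_partition_prob_general ℙ n M hstep m hmsum hmpos
end

section
/- Let x_1,...,x_n be real numbers with no two subsets having equal arithmetic means, and fix 1 ≤ u ≤ n. The '3214' transformation, which maps a permutation-path of the x_i together with the index u to the rearranged path (segment on [u,d], then [g,u], then [0,g], then [d,n], where [g,d] is the face of the convex minorant straddling u) together with the value d - g, is a bijection from {1,...,n} × {paths from permutations of x_1,...,x_n} to itself. -/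
/-!
Tilt the walk `W` of `σ` by the slope `ρ` of the face `[g, d]`, i.e. pass to `W j - ρ j`. Since
no two blocks of increments have the same mean, the tilted walk attains its minimum over
`[0, n]` exactly at `g` and at `d`. The image walk `V` is made of translated copies of pieces of
`W`, and `ρ` is its mean slope over `[0, d - g]`; tilted by `ρ`, it has the unique minimizer `d`
on `[d - g, n]` and the unique minimizer `d - u` on `[0, d - g)`. So the image determines
`g`, `u`, `d`, and then all increments of `W`, hence `σ`. An injective self-map of a finite set
is bijective.
-/

open Finset

/-- The walk of a permutation `σ` of the increments `x_1, …, x_n`: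
`walk x σ j = x_{σ(1)} + ⋯ + x_{σ(j)}`. -/
noncomputable def permWalk {n : ℕ} (x : Fin n → ℝ) (σ : Equiv.Perm (Fin n)) (j : ℕ) : ℝ :=
  ∑ i ∈ Finset.univ.filter (fun i : Fin n => (i : ℕ) < j), x (σ i)

section Walks

variable {W V W' : ℕ → ℝ} {ρ : ℝ} {a b s t L g u d n : ℕ}

noncomputable def chordSlope (W : ℕ → ℝ) (a b : ℕ) : ℝ := (W b - W a) / ((b : ℝ) - a)

def tilt (W : ℕ → ℝ) (ρ : ℝ) (j : ℕ) : ℝ := W j - ρ * j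

lemma tilt_chordSlope_eq (hab : a ≠ b) :
    tilt W (chordSlope W a b) a = tilt W (chordSlope W a b) b := by
  have : (b : ℝ) - a ≠ 0 := sub_ne_zero.2 (Nat.cast_injective.ne hab.symm)
  unfold tilt chordSlope
  field_simp
  ring

lemma chordSlope_eq_of_tilt_eq (hab : a ≠ b) (h : tilt W ρ a = tilt W ρ b) :
    chordSlope W a b = ρ := by
  have : (b : ℝ) - a ≠ 0 := sub_ne_zero.2 (Nat.cast_injective.ne hab.symm)
  unfold tilt at h
  unfold chordSlope
  rw [div_eq_iff this]
  linarith

def IsStrictFace (W : ℕ → ℝ) (g d n : ℕ) : Prop :=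
  ∀ j ≤ n, j ≠ g → j ≠ d → tilt W (chordSlope W g d) g < tilt W (chordSlope W g d) j

def IsShiftedCopy (V W : ℕ → ℝ) (s t L : ℕ) : Prop :=
  ∃ c, ∀ j ≤ L, V (s + j) = W (t + j) + c

namespace IsShiftedCopy

lemma sub_eq (h : IsShiftedCopy V W s t L) {i j : ℕ} (hi : i ≤ L) (hj : j ≤ L) :
    V (s + i) - V (s + j) = W (t + i) - W (t + j) := by
  obtain ⟨c, hc⟩ := h
  rw [hc i hi, hc j hj]
  ring

lemma tilt_sub_eq (h : IsShiftedCopy V W s t L) {i j : ℕ} (hi : i ≤ L) (hj : j ≤ L) :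
    tilt V ρ (s + i) - tilt V ρ (s + j) = tilt W ρ (t + i) - tilt W ρ (t + j) := by
  unfold tilt
  push_cast
  linear_combination h.sub_eq hi hj

lemma succ_sub_eq (h : IsShiftedCopy V W s t L) (h' : IsShiftedCopy V W' s t L) {i : ℕ}
    (hti : t ≤ i) (hiL : i < t + L) :
    W (i + 1) - W i = W' (i + 1) - W' i := by
  obtain ⟨j, rfl⟩ : ∃ j, i = t + j := ⟨i - t, by omega⟩
  have h1 := h.sub_eq (i := j + 1) (j := j) (by omega) (by omega)
  have h2 := h'.sub_eq (i := j + 1) (j := j) (by omega) (by omega)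
  simp only [← add_assoc] at h1 h2
  linarith

end IsShiftedCopy

structure IsRearrangement3214 (W V : ℕ → ℝ) (g u d n : ℕ) : Prop where
  copy_ud : IsShiftedCopy V W 0 u (d - u)
  copy_gu : IsShiftedCopy V W (d - u) g (u - g)
  copy_0g : IsShiftedCopy V W (d - g) 0 g
  copy_dn : IsShiftedCopy V W d d (n - d)

namespace IsRearrangement3214

lemma of_segments
    (hud : ∀ j ≤ d - u, V j = W (u + j) - W u)
    (hgu : ∀ j ≤ u - g, V (d - u + j) = (W d - W u) + (W (g + j) - W g))
    (h0g : ∀ j ≤ g, V (d - g + j) = (W d - W g) + W j)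
    (hdn : ∀ j ≤ n - d, V (d + j) = W (d + j)) :
    IsRearrangement3214 W V g u d n where
  copy_ud := ⟨-W u, fun j hj => by rw [zero_add, hud j hj, sub_eq_add_neg]⟩
  copy_gu := ⟨W d - W u - W g, fun j hj => by rw [hgu j hj]; ring⟩
  copy_0g := ⟨W d - W g, fun j hj => by rw [h0g j hj, zero_add, add_comm]⟩
  copy_dn := ⟨0, fun j hj => by rw [hdn j hj, add_zero]⟩

lemma chordSlope_eq (hV : IsRearrangement3214 W V g u d n) (hgu : g < u) (hud : u ≤ d) :
    chordSlope V 0 (d - g) = chordSlope W g d := by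
  have h1 := hV.copy_ud.sub_eq (i := d - u) (j := 0) le_rfl (Nat.zero_le _)
  have h2 := hV.copy_gu.sub_eq (i := u - g) (j := 0) le_rfl (Nat.zero_le _)
  rw [show d - u + (u - g) = d - g by omega, Nat.add_sub_cancel' hgu.le] at h2
  simp only [zero_add, add_zero, Nat.add_sub_cancel' hud] at h1 h2
  unfold chordSlope
  rw [Nat.cast_sub (hgu.trans_le hud).le]
  congr 1
  · linarith
  · ring

lemma tilt_lt_of_sub_le (hV : IsRearrangement3214 W V g u d n) (hW : IsStrictFace W g d n)
    (hgd : g < d) (hdn : d ≤ n) {k : ℕ} (hk : d - g ≤ k) (hkn : k ≤ n) (hkd : k ≠ d) :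
    tilt V (chordSlope W g d) d < tilt V (chordSlope W g d) k := by
  have hface := tilt_chordSlope_eq (W := W) hgd.ne
  rcases le_or_gt k d with hkd' | hdk
  · obtain ⟨j, rfl⟩ : ∃ j, k = d - g + j := ⟨k - (d - g), by omega⟩
    have h := hV.copy_0g.tilt_sub_eq (ρ := chordSlope W g d) (i := j) (j := g) (by omega) le_rfl
    rw [Nat.sub_add_cancel hgd.le, zero_add, zero_add] at h
    linarith [hW j (by omega) (by omega) (by omega)]
  · obtain ⟨j, rfl⟩ : ∃ j, k = d + j := ⟨k - d, by omega⟩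
    have h := hV.copy_dn.tilt_sub_eq (ρ := chordSlope W g d) (i := j) (j := 0) (by omega)
      (Nat.zero_le _)
    rw [add_zero] at h
    linarith [hW (d + j) hkn (by omega) hkd]

-- `k = d - g` must be excluded: for `u = d` it is a second minimizer.
lemma tilt_lt_of_lt_sub (hV : IsRearrangement3214 W V g u d n) (hW : IsStrictFace W g d n)
    (hgu : g < u) (hud : u ≤ d) (hdn : d ≤ n) {k : ℕ} (hk : k < d - g) (hku : k ≠ d - u) :
    tilt V (chordSlope W g d) (d - u) < tilt V (chordSlope W g d) k := by
  have hface := tilt_chordSlope_eq (W := W) (hgu.trans_le hud).ne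
  rcases le_or_gt k (d - u) with hk' | hk'
  · have h := hV.copy_ud.tilt_sub_eq (ρ := chordSlope W g d) (i := k) (j := d - u) hk' le_rfl
    rw [zero_add, zero_add, Nat.add_sub_cancel' hud] at h
    linarith [hW (u + k) (by omega) (by omega) (by omega)]
  · obtain ⟨j, rfl⟩ : ∃ j, k = d - u + j := ⟨k - (d - u), by omega⟩
    have h := hV.copy_gu.tilt_sub_eq (ρ := chordSlope W g d) (i := j) (j := 0) (by omega)
      (Nat.zero_le _)
    rw [add_zero, add_zero] at h
    linarith [hW (g + j) (by omega) (by omega) (by omega)]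

lemma cuts_unique (hV : IsRearrangement3214 W V g u d n)
    {g' u' d' : ℕ} (hV' : IsRearrangement3214 W' V g' u' d' n)
    (hW : IsStrictFace W g d n) (hW' : IsStrictFace W' g' d' n)
    (hgu : g < u) (hud : u ≤ d) (hdn : d ≤ n)
    (hgu' : g' < u') (hud' : u' ≤ d') (hdn' : d' ≤ n)
    (hm : d - g = d' - g') :
    g = g' ∧ u = u' ∧ d = d' := by
  have hρ : chordSlope W' g' d' = chordSlope W g d := by
    rw [← hV.chordSlope_eq hgu hud, ← hV'.chordSlope_eq hgu' hud', hm]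
  have hd : d = d' := by
    by_contra hne
    have h := hV.tilt_lt_of_sub_le hW (hgu.trans_le hud) hdn (k := d') (by omega) hdn'
      (Ne.symm hne)
    have h' := hV'.tilt_lt_of_sub_le hW' (hgu'.trans_le hud') hdn' (k := d) (by omega) hdn hne
    rw [hρ] at h'
    exact lt_asymm h h'
  subst hd
  have hu : d - u = d - u' := by
    by_contra hne
    have h := hV.tilt_lt_of_lt_sub hW hgu hud hdn (k := d - u') (by omega) (Ne.symm hne)
    have h' := hV'.tilt_lt_of_lt_sub hW' hgu' hud' hdn' (k := d - u) (by omega) hne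
    rw [hρ] at h'
    exact lt_asymm h h'
  omega

lemma succ_sub_eq (hV : IsRearrangement3214 W V g u d n) (hV' : IsRearrangement3214 W' V g u d n)
    {i : ℕ} (hi : i < n) :
    W (i + 1) - W i = W' (i + 1) - W' i := by
  rcases lt_or_ge i g with h | h
  · exact hV.copy_0g.succ_sub_eq hV'.copy_0g (Nat.zero_le _) (by omega)
  rcases lt_or_ge i u with h' | h'
  · exact hV.copy_gu.succ_sub_eq hV'.copy_gu h (by omega)
  rcases lt_or_ge i d with h'' | h''
  · exact hV.copy_ud.succ_sub_eq hV'.copy_ud h' (by omega)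
  · exact hV.copy_dn.succ_sub_eq hV'.copy_dn h'' (by omega)

end IsRearrangement3214

end Walks

section PermWalk

variable {n : ℕ} {x : Fin n → ℝ} {a b c e : ℕ}

def positions (n a b : ℕ) : Finset (Fin n) :=
  univ.filter fun i => a ≤ (i : ℕ) ∧ (i : ℕ) < b

lemma card_positions (hbn : b ≤ n) : (positions n a b).card = b - a := by
  rw [← card_image_of_injective _ Fin.val_injective, ← Nat.card_Ico]
  congr 1
  ext k
  simp only [positions, mem_image, mem_filter, mem_univ, true_and, mem_Ico]
  exact ⟨by rintro ⟨i, hi, rfl⟩; exact hi, fun hk => ⟨⟨k, by omega⟩, hk, rfl⟩⟩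

lemma positions_inj (h : positions n a b = positions n c e) (hab : a < b) (hbn : b ≤ n)
    (hce : c < e) (hen : e ≤ n) : a = c ∧ b = e := by
  have mem : ∀ {a b c e : ℕ}, positions n a b = positions n c e →
      ∀ k < n, a ≤ k → k < b → c ≤ k ∧ k < e := by
    intro a b c e h k hk h1 h2
    have hi : (⟨k, hk⟩ : Fin n) ∈ positions n a b := mem_filter.2 ⟨mem_univ _, h1, h2⟩
    rw [h] at hi
    exact (mem_filter.1 hi).2
  have := mem h a (by omega) le_rfl hab
  have := mem h (b - 1) (by omega) (by omega) (by omega)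
  have := mem h.symm c (by omega) le_rfl hce
  have := mem h.symm (e - 1) (by omega) (by omega) (by omega)
  omega

lemma permWalk_sub_eq_sum (σ : Equiv.Perm (Fin n)) (hab : a ≤ b) :
    permWalk x σ b - permWalk x σ a = ∑ i ∈ (positions n a b).map σ.toEmbedding, x i := by
  have hsplit : univ.filter (fun i : Fin n => (i : ℕ) < b)
      = univ.filter (fun i : Fin n => (i : ℕ) < a) ∪ positions n a b := by
    ext i
    simp only [positions, mem_union, mem_filter, mem_univ, true_and]
    omega
  have hdisj : Disjoint (univ.filter fun i : Fin n => (i : ℕ) < a) (positions n a b) := by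
    simp only [disjoint_left, positions, mem_filter, mem_univ, true_and]
    omega
  rw [permWalk, permWalk, hsplit, sum_union hdisj, sum_map]
  simp

lemma permWalk_succ_sub (σ : Equiv.Perm (Fin n)) (i : Fin n) :
    permWalk x σ (i + 1) - permWalk x σ i = x (σ i) := by
  have : positions n i (i + 1) = {i} := by
    ext j
    simp only [positions, mem_filter, mem_univ, true_and, mem_singleton, Fin.ext_iff]
    omega
  rw [permWalk_sub_eq_sum σ (Nat.le_succ _), this, map_singleton, sum_singleton]
  rfl

lemma perm_eq_of_permWalk_succ_sub_eq (hx : Function.Injective x) {σ σ' : Equiv.Perm (Fin n)}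
    (h : ∀ i < n,
      permWalk x σ (i + 1) - permWalk x σ i = permWalk x σ' (i + 1) - permWalk x σ' i) :
    σ = σ' :=
  Equiv.ext fun i => hx <| by
    rw [← permWalk_succ_sub (x := x) σ i, ← permWalk_succ_sub (x := x) σ' i, h i i.isLt]

lemma chordSlope_permWalk (σ : Equiv.Perm (Fin n)) (hab : a ≤ b) (hbn : b ≤ n) :
    chordSlope (permWalk x σ) a b = (∑ i ∈ (positions n a b).map σ.toEmbedding, x i)
      / ((positions n a b).map σ.toEmbedding).card := by
  rw [chordSlope, permWalk_sub_eq_sum σ hab, card_map, card_positions hbn, Nat.cast_sub hab]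

def HasDistinctSubsetMeans (x : Fin n → ℝ) : Prop :=
  ∀ A B : Finset (Fin n), A.Nonempty → B.Nonempty → A ≠ B →
    (∑ i ∈ A, x i) / (A.card : ℝ) ≠ (∑ i ∈ B, x i) / (B.card : ℝ)

namespace HasDistinctSubsetMeans

lemma injective (hx : HasDistinctSubsetMeans x) : Function.Injective x := by
  intro i j h
  by_contra hne
  exact hx {i} {j} (singleton_nonempty i) (singleton_nonempty j)
    (fun hs => hne (singleton_injective hs)) (by simp [h])

lemma chordSlope_permWalk_inj (hx : HasDistinctSubsetMeans x) (σ : Equiv.Perm (Fin n))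
    (hab : a < b) (hbn : b ≤ n) (hce : c < e) (hen : e ≤ n)
    (h : chordSlope (permWalk x σ) a b = chordSlope (permWalk x σ) c e) : a = c ∧ b = e := by
  by_contra hne
  have hpos : ∀ {a b}, a < b → b ≤ n → ((positions n a b).map σ.toEmbedding).Nonempty :=
    fun hab hbn => by rw [← card_pos, card_map, card_positions hbn]; omega
  refine hx _ _ (hpos hab hbn) (hpos hce hen) (fun hmap => hne ?_) ?_
  · exact positions_inj (map_inj.1 hmap) hab hbn hce hen
  · rwa [← chordSlope_permWalk σ hab.le hbn, ← chordSlope_permWalk σ hce.le hen]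

lemma isStrictFace_permWalk (hx : HasDistinctSubsetMeans x) (σ : Equiv.Perm (Fin n)) {g d : ℕ}
    (hgd : g < d) (hdn : d ≤ n)
    (hchord : ∀ j ≤ n, permWalk x σ g
        + (((j : ℝ) - g) / ((d : ℝ) - g)) * (permWalk x σ d - permWalk x σ g)
      ≤ permWalk x σ j) :
    IsStrictFace (permWalk x σ) g d n := by
  intro j hj hjg hjd
  refine lt_of_le_of_ne ?_ fun heq => ?_
  · have := hchord j hj
    unfold tilt chordSlope
    linear_combination this
  rcases lt_or_gt_of_ne hjg with hlt | hgt
  · exact hjg (hx.chordSlope_permWalk_inj σ hlt (hgd.le.trans hdn) hgd hdn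
      (chordSlope_eq_of_tilt_eq hlt.ne heq.symm)).1
  · exact hjd (hx.chordSlope_permWalk_inj σ hgt hj hgd hdn
      (chordSlope_eq_of_tilt_eq hgt.ne heq)).2

end HasDistinctSubsetMeans

end PermWalk

theorem transform_3214_bijective_general (n : ℕ) (x : Fin n → ℝ)
    (hties : ∀ A B : Finset (Fin n), A.Nonempty → B.Nonempty → A ≠ B →
      (∑ i ∈ A, x i) / (A.card : ℝ) ≠ (∑ i ∈ B, x i) / (B.card : ℝ))
    (T : Set.Icc 1 n × Equiv.Perm (Fin n) → Set.Icc 1 n × Equiv.Perm (Fin n))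
    (hT : ∀ u : Set.Icc 1 n, ∀ σ : Equiv.Perm (Fin n), ∃ g d : ℕ,
      g < (u : ℕ) ∧ (u : ℕ) ≤ d ∧ d ≤ n ∧
      (∀ j ≤ n, permWalk x σ g
          + (((j : ℝ) - g) / ((d : ℝ) - g)) * (permWalk x σ d - permWalk x σ g)
        ≤ permWalk x σ j) ∧
      (((T (u, σ)).1 : ℕ) = d - g) ∧
      (∀ j ≤ d - (u : ℕ), permWalk x (T (u, σ)).2 j
        = permWalk x σ ((u : ℕ) + j) - permWalk x σ u) ∧
      (∀ j ≤ (u : ℕ) - g, permWalk x (T (u, σ)).2 (d - (u : ℕ) + j)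
        = (permWalk x σ d - permWalk x σ u) + (permWalk x σ (g + j) - permWalk x σ g)) ∧
      (∀ j ≤ g, permWalk x (T (u, σ)).2 (d - g + j)
        = (permWalk x σ d - permWalk x σ g) + permWalk x σ j) ∧
      (∀ j ≤ n - d, permWalk x (T (u, σ)).2 (d + j) = permWalk x σ (d + j))) :
    Function.Bijective T := by
  have hspec : ∀ (u : Set.Icc 1 n) (σ : Equiv.Perm (Fin n)), ∃ g d : ℕ,
      g < (u : ℕ) ∧ (u : ℕ) ≤ d ∧ d ≤ n ∧ ((T (u, σ)).1 : ℕ) = d - g ∧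
      IsStrictFace (permWalk x σ) g d n ∧
      IsRearrangement3214 (permWalk x σ) (permWalk x (T (u, σ)).2) g u d n := by
    intro u σ
    obtain ⟨g, d, hgu, hud, hdn, hchord, hm, hud_seg, hgu_seg, h0g_seg, hdn_seg⟩ := hT u σ
    exact ⟨g, d, hgu, hud, hdn, hm,
      HasDistinctSubsetMeans.isStrictFace_permWalk hties σ (hgu.trans_le hud) hdn hchord,
      .of_segments hud_seg hgu_seg h0g_seg hdn_seg⟩
  rw [← Finite.injective_iff_bijective]
  rintro ⟨u, σ⟩ ⟨u', σ'⟩ hTeq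
  obtain ⟨g, d, hgu, hud, hdn, hm, hW, hV⟩ := hspec u σ
  obtain ⟨g', d', hgu', hud', hdn', hm', hW', hV'⟩ := hspec u' σ'
  rw [hTeq] at hm hV
  obtain ⟨rfl, hu, rfl⟩ :=
    hV.cuts_unique hV' hW hW' hgu hud hdn hgu' hud' hdn' (hm.symm.trans hm')
  obtain rfl : u = u' := Subtype.ext hu
  exact Prod.ext rfl <| perm_eq_of_permWalk_succ_sub_eq (HasDistinctSubsetMeans.injective hties)
    fun i hi => hV.succ_sub_eq hV' hi

/-- The `3214` transformation is a bijection.  Let `x_1, …, x_n` have no two nonempty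
subsets with equal arithmetic means, and let `T` map a pair `(u, σ)`, where
`1 ≤ u ≤ n` and `σ` is a permutation of the increments, to the pair `(d - g, σ')`:
here `[g, d]` is the face of the convex minorant of the walk of `σ` straddling `u`
(characterized by `g < u ≤ d` and the chord from `(g, s_g)` to `(d, s_d)` lying below
the whole walk), and the walk of `σ'` is obtained by concatenating the segments of the
walk of `σ` over `[u,d]`, `[g,u]`, `[0,g]`, `[d,n]` in this order.  Then `T` is a
bijection of `{1, …, n} × {permutations}`. -/
theorem transform_3214_bijective (n : ℕ) (hn : 1 ≤ n) (x : Fin n → ℝ)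
    (hties : ∀ A B : Finset (Fin n), A.Nonempty → B.Nonempty → A ≠ B →
      (∑ i ∈ A, x i) / (A.card : ℝ) ≠ (∑ i ∈ B, x i) / (B.card : ℝ))
    (T : Set.Icc 1 n × Equiv.Perm (Fin n) → Set.Icc 1 n × Equiv.Perm (Fin n))
    (hT : ∀ u : Set.Icc 1 n, ∀ σ : Equiv.Perm (Fin n), ∃ g d : ℕ,
      g < (u : ℕ) ∧ (u : ℕ) ≤ d ∧ d ≤ n ∧
      (∀ j ≤ n, permWalk x σ g
          + (((j : ℝ) - g) / ((d : ℝ) - g)) * (permWalk x σ d - permWalk x σ g)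
        ≤ permWalk x σ j) ∧
      (((T (u, σ)).1 : ℕ) = d - g) ∧
      (∀ j ≤ d - (u : ℕ), permWalk x (T (u, σ)).2 j
        = permWalk x σ ((u : ℕ) + j) - permWalk x σ u) ∧
      (∀ j ≤ (u : ℕ) - g, permWalk x (T (u, σ)).2 (d - (u : ℕ) + j)
        = (permWalk x σ d - permWalk x σ u) + (permWalk x σ (g + j) - permWalk x σ g)) ∧
      (∀ j ≤ g, permWalk x (T (u, σ)).2 (d - g + j)
        = (permWalk x σ d - permWalk x σ g) + permWalk x σ j) ∧
      (∀ j ≤ n - d, permWalk x (T (u, σ)).2 (d + j) = permWalk x σ (d + j))) :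
    Function.Bijective T :=
  transform_3214_bijective_general n x hties T hT
end

section
/- Let (τ_n, ρ_n) satisfy the (τ,ρ) recursion: ρ_{n+1} = U_n ρ_n and τ_{n+1} = τ_n ρ_{n+1}² / (τ_n Z_{n+1}² + ρ_{n+1}²), where U_n are i.i.d. uniform on (0,1) and Z_n² are i.i.d. squares of standard normals, all independent of (τ_0, ρ_0) with τ_0, ρ_0 > 0 almost surely. Then τ_n → 0 and ρ_n → 0 almost surely as n → ∞. -/
open MeasureTheory ProbabilityTheory Filter

/-- Index type for the independence hypothesis: the uniforms, the normals,
and the initial pair `(τ₀, ρ₀)`. -/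
def tauRhoIdx : Type := ℕ ⊕ ℕ ⊕ Unit

/-- Codomains: each uniform and each normal is real-valued, the initial data is a pair. -/
def tauRhoVal : tauRhoIdx → Type
  | .inl _ => ℝ
  | .inr (.inl _) => ℝ
  | .inr (.inr _) => ℝ × ℝ

instance tauRhoValMeasurableSpace : ∀ i, MeasurableSpace (tauRhoVal i)
  | .inl _ => inferInstanceAs (MeasurableSpace ℝ)
  | .inr (.inl _) => inferInstanceAs (MeasurableSpace ℝ)
  | .inr (.inr _) => inferInstanceAs (MeasurableSpace (ℝ × ℝ))

/-- The combined family of random variables for the independence hypothesis. -/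
def tauRhoFam {Ω : Type*} (U Z : ℕ → Ω → ℝ) (τ ρ : ℕ → Ω → ℝ) :
    ∀ i : tauRhoIdx, Ω → tauRhoVal i
  | .inl n => U n
  | .inr (.inl n) => Z n
  | .inr (.inr _) => fun ω => (τ 0 ω, ρ 0 ω)

/-!
By the second Borel–Cantelli lemma, almost surely `U_n < 1/2` for infinitely many `n` and
`Z_{n+1} ≥ 1` for infinitely many `n`. Along the path, `ρ` is positive and decreasing and is
at least halved infinitely often, so it tends to `0`. The map `τ ↦ τ ρ² / (τ Z² + ρ²)` never increases
`τ` and lands below `ρ²` whenever `Z² ≥ 1`; so `τ` is decreasing and infinitely often below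
`ρ_n² → 0`, hence tends to `0` as well.
-/

open Set Topology

section Antitone

variable {f g : ℕ → ℝ}

theorem Antitone.tendsto_zero_of_frequently_le (hf : Antitone f) (hf0 : ∀ n, 0 ≤ f n)
    (hg : Tendsto g atTop (𝓝 0)) (hfg : ∃ᶠ n in atTop, f n ≤ g n) :
    Tendsto f atTop (𝓝 0) := by
  have hlim := tendsto_atTop_ciInf hf ⟨0, by rintro _ ⟨n, rfl⟩; exact hf0 n⟩
  have hle : ⨅ n, f n ≤ 0 := le_of_tendsto_of_tendsto_of_frequently hlim hg hfg
  rwa [le_antisymm hle (le_ciInf hf0)] at hlim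

theorem Antitone.tendsto_zero_of_frequently_le_mul {c : ℝ} (hf : Antitone f)
    (hf0 : ∀ n, 0 ≤ f n) (hc : c < 1) (hfc : ∃ᶠ n in atTop, f (n + 1) ≤ c * f n) :
    Tendsto f atTop (𝓝 0) := by
  have hlim := tendsto_atTop_ciInf hf ⟨0, by rintro _ ⟨n, rfl⟩; exact hf0 n⟩
  have hle : ⨅ n, f n ≤ c * ⨅ n, f n :=
    le_of_tendsto_of_tendsto_of_frequently (hlim.comp (tendsto_add_atTop_nat 1))
      (hlim.const_mul c) hfc
  have hnonneg : 0 ≤ ⨅ n, f n := le_ciInf hf0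
  rwa [show ⨅ n, f n = 0 by nlinarith] at hlim

end Antitone

theorem ae_mem_of_map_eq_restrict {Ω β : Type*} [MeasurableSpace Ω] [MeasurableSpace β]
    {P : Measure Ω} {X : Ω → β} {μ : Measure β} {s : Set β} (hX : Measurable X)
    (hs : MeasurableSet s) (hdist : P.map X = μ.restrict s) : ∀ᵐ ω ∂P, X ω ∈ s :=
  ae_of_ae_map hX.aemeasurable (hdist ▸ ae_restrict_mem hs)

theorem ae_frequently_mem_of_iIndepFun_of_map_eq {Ω β : Type*} [MeasurableSpace Ω]
    [MeasurableSpace β] {P : Measure Ω} [IsProbabilityMeasure P] {X : ℕ → Ω → β}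
    {ν : Measure β} {A : Set β} (hX : ∀ n, Measurable (X n)) (hind : iIndepFun X P)
    (hdist : ∀ n, P.map (X n) = ν) (hA : MeasurableSet A) (hνA : ν A ≠ 0) :
    ∀ᵐ ω ∂P, ∃ᶠ n in atTop, X n ω ∈ A := by
  have hmeas n : MeasurableSet (X n ⁻¹' A) := hX n hA
  have hprob n : P (X n ⁻¹' A) = ν A := by rw [← hdist n, Measure.map_apply (hX n) hA]
  have hindA : iIndepSet (fun n => X n ⁻¹' A) P :=
    (iIndepSet_iff_meas_biInter hmeas).2 fun S =>
      hind.measure_inter_preimage_eq_mul S fun _ _ => hA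
  have hsum : ∑' n, P (X n ⁻¹' A) = ⊤ := by
    simp only [hprob]
    exact ENNReal.tsum_const_eq_top_of_ne_zero hνA
  have hlimsup := measure_limsup_eq_one hmeas hindA hsum
  filter_upwards [(mem_ae_iff_prob_eq_one (MeasurableSet.measurableSet_limsup hmeas)).2 hlimsup]
    with ω hω using mem_limsup_iff_frequently_mem.1 hω

/-- The step `τ_n ↦ τ_{n+1}` of the recursion, with `r = ρ_{n+1}` and `z = Z_{n+1}`. -/
noncomputable def tauStep (t r z : ℝ) : ℝ := t * r ^ 2 / (t * z ^ 2 + r ^ 2)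

section tauStep

variable {t r : ℝ}

theorem tauStep_pos (z : ℝ) (ht : 0 < t) (hr : 0 < r) : 0 < tauStep t r z := by
  unfold tauStep
  positivity

theorem tauStep_le_left (z : ℝ) (ht : 0 < t) (hr : 0 < r) : tauStep t r z ≤ t := by
  unfold tauStep
  rw [div_le_iff₀ (by positivity)]
  nlinarith [sq_nonneg (t * z)]

theorem tauStep_le_sq {z : ℝ} (ht : 0 < t) (hr : 0 < r) (hz : 1 ≤ z ^ 2) :
    tauStep t r z ≤ r ^ 2 := by
  unfold tauStep
  rw [div_le_iff₀ (by positivity)]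
  nlinarith [mul_le_mul_of_nonneg_left hz (by positivity : 0 ≤ t * r ^ 2)]

end tauStep

theorem tendsto_zero_of_tauStep_recursion {u z t r : ℕ → ℝ} (ht0 : 0 < t 0) (hr0 : 0 < r 0)
    (hu : ∀ n, u n ∈ Ioo 0 1) (hu_small : ∃ᶠ n in atTop, u n < 1 / 2)
    (hz_large : ∃ᶠ n in atTop, 1 ≤ z (n + 1)) (hr : ∀ n, r (n + 1) = u n * r n)
    (ht : ∀ n, t (n + 1) = tauStep (t n) (r (n + 1)) (z (n + 1))) :
    Tendsto t atTop (𝓝 0) ∧ Tendsto r atTop (𝓝 0) := by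
  have hr_pos : ∀ n, 0 < r n := fun n => by
    induction n with
    | zero => exact hr0
    | succ n ih => rw [hr]; exact mul_pos (hu n).1 ih
  have ht_pos : ∀ n, 0 < t n := fun n => by
    induction n with
    | zero => exact ht0
    | succ n ih => rw [ht]; exact tauStep_pos _ ih (hr_pos _)
  have hr_anti : Antitone r := antitone_nat_of_succ_le fun n => by
    rw [hr]; exact mul_le_of_le_one_left (hr_pos n).le (hu n).2.le
  have ht_anti : Antitone t := antitone_nat_of_succ_le fun n => by
    rw [ht]; exact tauStep_le_left _ (ht_pos n) (hr_pos _)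
  have hr_lim : Tendsto r atTop (𝓝 0) :=
    hr_anti.tendsto_zero_of_frequently_le_mul (fun n => (hr_pos n).le) one_half_lt_one
      (hu_small.mono fun n hn => by rw [hr]; exact mul_le_mul_of_nonneg_right hn.le (hr_pos n).le)
  have ht_le_sq : ∃ᶠ n in atTop, t n ≤ r n ^ 2 :=
    (tendsto_add_atTop_nat 1).frequently <| hz_large.mono fun n hn => by
      rw [ht]; exact tauStep_le_sq (ht_pos n) (hr_pos _) (one_le_pow₀ hn)
  refine ⟨ht_anti.tendsto_zero_of_frequently_le (fun n => (ht_pos n).le) ?_ ht_le_sq, hr_lim⟩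
  simpa using hr_lim.pow 2

theorem tau_rho_recursion_tendsto_zero_general
    {Ω : Type*} [MeasurableSpace Ω] (P : Measure Ω) [IsProbabilityMeasure P]
    (U Z τ ρ : ℕ → Ω → ℝ)
    (hmeasU : ∀ n, Measurable (U n)) (hmeasZ : ∀ n, Measurable (Z n))
    (hindep : iIndepFun (tauRhoFam U Z τ ρ) P)
    (hU : ∀ n, Measure.map (U n) P = (volume : Measure ℝ).restrict (Set.Ioo 0 1))
    (hZ : ∀ n, Measure.map (Z n) P = gaussianReal 0 1)
    (hpos : ∀ᵐ ω ∂P, 0 < τ 0 ω ∧ 0 < ρ 0 ω)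
    (hρ : ∀ n ω, ρ (n + 1) ω = U n ω * ρ n ω)
    (hτ : ∀ n ω, τ (n + 1) ω
      = τ n ω * (ρ (n + 1) ω) ^ 2 / (τ n ω * (Z (n + 1) ω) ^ 2 + (ρ (n + 1) ω) ^ 2)) :
    ∀ᵐ ω ∂P, Tendsto (fun n => τ n ω) atTop (nhds 0)
      ∧ Tendsto (fun n => ρ n ω) atTop (nhds 0) := by
  have hU_mem : ∀ᵐ ω ∂P, ∀ n, U n ω ∈ Ioo 0 1 :=
    ae_all_iff.2 fun n => ae_mem_of_map_eq_restrict (hmeasU n) measurableSet_Ioo (hU n)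
  have hU_small : ∀ᵐ ω ∂P, ∃ᶠ n in atTop, U n ω ∈ Iio (1 / 2) := by
    refine ae_frequently_mem_of_iIndepFun_of_map_eq hmeasU
      (hindep.precomp (g := Sum.inl) Sum.inl_injective) hU measurableSet_Iio ?_
    rw [Measure.restrict_apply measurableSet_Iio, Iio_inter_Ioo]
    norm_num
  have hZ_large : ∀ᵐ ω ∂P, ∃ᶠ n in atTop, Z (n + 1) ω ∈ Ici 1 := by
    refine ae_frequently_mem_of_iIndepFun_of_map_eq (fun n => hmeasZ (n + 1))
      (hindep.precomp (g := fun n => .inr (.inl (n + 1)))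
        ((Sum.inr_injective.comp Sum.inl_injective).comp (add_left_injective 1)))
      (fun n => hZ (n + 1)) measurableSet_Ici fun h => ?_
    simpa using gaussianReal_absolutelyContinuous' 0 one_ne_zero h
  filter_upwards [hpos, hU_mem, hU_small, hZ_large] with ω ⟨hτ0, hρ0⟩ hUω hU_smallω hZ_largeω
  exact tendsto_zero_of_tauStep_recursion (z := fun n => Z n ω) hτ0 hρ0 hUω hU_smallω hZ_largeω
    (fun n => hρ n ω) (fun n => hτ n ω)

/-- The `(τ, ρ)` recursion: `ρ_{n+1} = U_n ρ_n` and
`τ_{n+1} = τ_n ρ_{n+1}² / (τ_n Z_{n+1}² + ρ_{n+1}²)` with `U_n` i.i.d. uniform on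
`(0,1)`, `Z_n` i.i.d. standard normal, all independent of the a.s. positive initial
values `(τ₀, ρ₀)`.  Then `τ_n → 0` and `ρ_n → 0` almost surely. -/
theorem tau_rho_recursion_tendsto_zero
    {Ω : Type*} [MeasurableSpace Ω] (P : Measure Ω) [IsProbabilityMeasure P]
    (U Z τ ρ : ℕ → Ω → ℝ)
    (hmeasU : ∀ n, Measurable (U n)) (hmeasZ : ∀ n, Measurable (Z n))
    (hmeas0 : Measurable fun ω => (τ 0 ω, ρ 0 ω))
    (hindep : iIndepFun (tauRhoFam U Z τ ρ) P)
    (hU : ∀ n, Measure.map (U n) P = (volume : Measure ℝ).restrict (Set.Ioo 0 1))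
    (hZ : ∀ n, Measure.map (Z n) P = gaussianReal 0 1)
    (hpos : ∀ᵐ ω ∂P, 0 < τ 0 ω ∧ 0 < ρ 0 ω)
    (hρ : ∀ n ω, ρ (n + 1) ω = U n ω * ρ n ω)
    (hτ : ∀ n ω, τ (n + 1) ω
      = τ n ω * (ρ (n + 1) ω) ^ 2 / (τ n ω * (Z (n + 1) ω) ^ 2 + (ρ (n + 1) ω) ^ 2)) :
    ∀ᵐ ω ∂P, Tendsto (fun n => τ n ω) atTop (nhds 0)
      ∧ Tendsto (fun n => ρ n ω) atTop (nhds 0) :=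
  tau_rho_recursion_tendsto_zero_general P U Z τ ρ hmeasU hmeasZ hindep hU hZ hpos hρ hτ
end
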